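/- Let B = (b_1, …, b_n) ∈ ℝ^{m×n} be a basis, let α, β ≥ 1, and let 1 ≤ d < n. If B_{[d+1,n]} is β-SVP-reduced, ‖b_1‖ ≤ α·‖b*_{d+1}‖, and λ_1(L(B)) < λ_1(L(B_{[1,d]})), then B is αβ-SVP-reduced, i.e., ‖b_1‖ ≤ αβ·λ_1(L(B)). -/

import Mathlib

noncomputable section

/-- Euclidean space `ℝ^m`. -/
abbrev Euc (m : ℕ) : Type := EuclideanSpace ℝ (Fin m)

variable {m : ℕ}

/-- `projGS B s` is the orthogonal projection `π_{s+1}` onto the subspace orthogonal to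
`b_1, …, b_s` (0-based: orthogonal to `B 0, …, B (s-1)`). -/
def projGS (B : ℕ → Euc m) (s : ℕ) (x : Euc m) : Euc m :=
  (Submodule.orthogonalProjectionOnto ((Submodule.span ℝ (B '' Set.Iio s))ᗮ) x : Euc m)

/-- The Gram–Schmidt vector `b*_{i+1}` (0-based index `i`). -/
def gsoVec (B : ℕ → Euc m) (i : ℕ) : Euc m := projGS B i (B i)

/-- The projected block `B_{[s+1, s+ℓ]}` (0-based start `s`; the length is supplied
separately to the predicates below). -/
def block (B : ℕ → Euc m) (s : ℕ) : ℕ → Euc m := fun t => projGS B s (B (s + t))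

/-- Gram matrix of the first `ℓ` vectors. -/
def gram (B : ℕ → Euc m) (ℓ : ℕ) : Matrix (Fin ℓ) (Fin ℓ) ℝ :=
  Matrix.of fun i j => (inner ℝ (B i) (B j) : ℝ)

/-- `vol(L(B)) = det(BᵀB)^{1/2}` for the first `ℓ` vectors. -/
def volB (B : ℕ → Euc m) (ℓ : ℕ) : ℝ := Real.sqrt (gram B ℓ).det

/-- The lattice generated by the first `ℓ` vectors. -/
def latticeSpan (B : ℕ → Euc m) (ℓ : ℕ) : Submodule ℤ (Euc m) :=
  Submodule.span ℤ (B '' Set.Iio ℓ)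

/-- `λ₁(L)`: the minimum norm of a nonzero lattice vector. -/
def lambda1 (L : Submodule ℤ (Euc m)) : ℝ :=
  sInf {r : ℝ | ∃ x ∈ L, x ≠ 0 ∧ ‖x‖ = r}

/-- `B` (of rank `ℓ`) is `δ`-SVP-reduced. -/
def SVPReduced (δ : ℝ) (B : ℕ → Euc m) (ℓ : ℕ) : Prop :=
  ‖B 0‖ ≤ δ * lambda1 (latticeSpan B ℓ)

/-- `B` (of rank `ℓ`) is `δ`-HSVP-reduced. -/
def HSVPReduced (δ : ℝ) (B : ℕ → Euc m) (ℓ : ℕ) : Prop :=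
  ‖B 0‖ ≤ δ * volB B ℓ ^ ((1 : ℝ) / ℓ)

/-- The dual basis `B^× = B (BᵀB)⁻¹` of the first `ℓ` vectors (extended by `0`). -/
def dualFam (B : ℕ → Euc m) (ℓ : ℕ) : ℕ → Euc m := fun i =>
  if h : i < ℓ then ∑ j : Fin ℓ, ((gram B ℓ)⁻¹ j ⟨i, h⟩) • B j else 0

/-- The reversed dual basis `B^{-s}`. -/
def revDual (B : ℕ → Euc m) (ℓ : ℕ) : ℕ → Euc m := fun i => dualFam B ℓ (ℓ - 1 - i)

/-- `B` (of rank `ℓ`) is `δ`-DHSVP-reduced: its reversed dual basis is `δ`-HSVP-reduced. -/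
def DHSVPReduced (δ : ℝ) (B : ℕ → Euc m) (ℓ : ℕ) : Prop :=
  HSVPReduced δ (revDual B ℓ) ℓ

/-- `B = (b_1, …, b_{d+1})` is `δ`-twin-reduced: `B_{[1,d]}` is `δ`-HSVP-reduced and
`B_{[2,d+1]}` is `δ`-DHSVP-reduced. -/
def TwinReduced (δ : ℝ) (B : ℕ → Euc m) (d : ℕ) : Prop :=
  HSVPReduced δ (block B 0) d ∧ DHSVPReduced δ (block B 1) d

/-- Gram–Schmidt coefficient `μ_{i,j}` (0-based). -/
def mu (B : ℕ → Euc m) (i j : ℕ) : ℝ :=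
  (inner ℝ (B i) (gsoVec B j) : ℝ) / ‖gsoVec B j‖ ^ 2

/-- The first `ℓ` vectors are size-reduced. -/
def SizeReduced (B : ℕ → Euc m) (ℓ : ℕ) : Prop :=
  ∀ i j, j < i → i < ℓ → |mu B i j| ≤ 1 / 2

/-- The first `ℓ` vectors are `ε`-LLL-reduced. -/
def LLLReduced (ε : ℝ) (B : ℕ → Euc m) (ℓ : ℕ) : Prop :=
  SizeReduced B ℓ ∧
    ∀ i, 0 < i → i < ℓ →
      ‖gsoVec B (i - 1)‖ ^ 2 ≤ (1 + ε) * ‖mu B i (i - 1) • gsoVec B (i - 1) + gsoVec B i‖ ^ 2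

/-- `B` (of rank `ℓ`) is `δ`-DSVP-reduced: its reversed dual basis is `δ`-SVP-reduced
and `B` is `(1/3)`-LLL-reduced. -/
def DSVPReduced (δ : ℝ) (B : ℕ → Euc m) (ℓ : ℕ) : Prop :=
  SVPReduced δ (revDual B ℓ) ℓ ∧ LLLReduced (1 / 3) B ℓ

/-- `γ` is an admissible Hermite bound for rank `r`: every lattice generated by `r`
linearly independent vectors of a Euclidean space satisfies `λ₁² ≤ γ · vol^{2/r}`. -/
def IsHermiteBound (γ : ℝ) (r : ℕ) : Prop :=
  ∀ (m' : ℕ) (v : ℕ → Euc m'), LinearIndependent ℝ (fun i : Fin r => v i) →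
    lambda1 (latticeSpan v r) ^ 2 ≤ γ * volB v r ^ ((2 : ℝ) / r)


/-! A nonzero `x ∈ L(B)` shorter than `λ₁(L(B_{[1,d]}))` does not lie in `L(B_{[1,d]})`. Splitting
`x = y + w` with `y ∈ L(B_{[1,d]})` and `w` an integer combination of `b_{d+1}, …, b_n`, we get
`w ≠ 0`, and linear independence makes `π_{d+1}` injective on the span of `b_{d+1}, …, b_n`, so
`π_{d+1}(x) = π_{d+1}(w)` is a nonzero vector of `L(B_{[d+1,n]})` of norm at most `‖x‖`. Hence
`λ₁(L(B_{[d+1,n]})) ≤ λ₁(L(B))`, and `‖b₁‖ ≤ α‖b*_{d+1}‖ ≤ αβ λ₁(L(B_{[d+1,n]})) ≤ αβ λ₁(L(B))`. -/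

section

open Submodule Set

lemma projGS_eq_starProjection (B : ℕ → Euc m) (s : ℕ) :
    projGS B s = (span ℝ (B '' Iio s))ᗮ.starProjection :=
  rfl

lemma block_zero (B : ℕ → Euc m) : block B 0 = B := by
  funext t
  simp [block, projGS_eq_starProjection, starProjection_top]

lemma norm_projGS_le (B : ℕ → Euc m) (s : ℕ) (x : Euc m) : ‖projGS B s x‖ ≤ ‖x‖ :=
  norm_starProjection_apply_le _ x

lemma projGS_eq_zero_iff {B : ℕ → Euc m} {s : ℕ} {x : Euc m} :
    projGS B s x = 0 ↔ x ∈ span ℝ (B '' Iio s) := by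
  rw [projGS_eq_starProjection, starProjection_apply_eq_zero_iff, orthogonal_orthogonal]

lemma projGS_mem_latticeSpan_block {B : ℕ → Euc m} {d n : ℕ} {x : Euc m}
    (hx : x ∈ latticeSpan B n) : projGS B d x ∈ latticeSpan (block B d) (n - d) := by
  let P : Euc m →ₗ[ℤ] Euc m :=
    ((span ℝ (B '' Iio d))ᗮ.starProjection : Euc m →ₗ[ℝ] Euc m).restrictScalars ℤ
  refine span_le.mpr ?_ (apply_mem_span_image_of_mem_span P hx)
  rintro _ ⟨_, ⟨i, hi, rfl⟩, rfl⟩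
  change projGS B d (B i) ∈ (latticeSpan (block B d) (n - d) : Set (Euc m))
  rcases lt_or_ge i d with hid | hid
  · rw [projGS_eq_zero_iff.mpr (subset_span ⟨i, hid, rfl⟩)]
    exact zero_mem _
  · obtain ⟨k, rfl⟩ := Nat.exists_eq_add_of_le hid
    exact subset_span ⟨k, by simp only [mem_Iio] at hi ⊢; omega, rfl⟩

lemma mem_latticeSpan_of_projGS_eq_zero {B : ℕ → Euc m} {d n : ℕ}
    (hB : LinearIndepOn ℝ B (Iio n)) (hdn : d ≤ n) {x : Euc m}
    (hx : x ∈ latticeSpan B n) (h0 : projGS B d x = 0) : x ∈ latticeSpan B d := by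
  have hsplit : Iio d ∪ Ico d n = Iio n := Iio_union_Ico_eq_Iio hdn
  have hdisj : Disjoint (span ℝ (B '' Iio d)) (span ℝ (B '' Ico d n)) :=
    ((linearIndepOn_union_iff ((Iio_disjoint_Ici le_rfl).mono_right Ico_subset_Ici_self)).mp
      (hsplit ▸ hB)).2.2
  rw [latticeSpan, ← hsplit, image_union, span_union] at hx
  obtain ⟨y, hy, w, hw, rfl⟩ := mem_sup.mp hx
  have hyR : y ∈ span ℝ (B '' Iio d) := span_le_restrictScalars ℤ ℝ _ hy
  have hwR : w ∈ span ℝ (B '' Ico d n) := span_le_restrictScalars ℤ ℝ _ hw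
  have hw0 : projGS B d w = 0 := by
    rwa [projGS_eq_starProjection, map_add, ← projGS_eq_starProjection,
      projGS_eq_zero_iff.mpr hyR, zero_add] at h0
  rw [Submodule.disjoint_def.mp hdisj w (projGS_eq_zero_iff.mp hw0) hwR, add_zero]
  exact hy

end

lemma lambda1_le_norm {L : Submodule ℤ (Euc m)} {x : Euc m} (hx : x ∈ L) (hx0 : x ≠ 0) :
    lambda1 L ≤ ‖x‖ :=
  csInf_le ⟨0, by rintro r ⟨y, _, _, rfl⟩; exact norm_nonneg y⟩ ⟨x, hx, hx0, rfl⟩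

lemma le_lambda1_of_forall_lt {L : Submodule ℤ (Euc m)} {r c : ℝ} (hL : ∃ x ∈ L, x ≠ 0)
    (hc : lambda1 L < c) (h : ∀ x ∈ L, x ≠ 0 → ‖x‖ < c → r ≤ ‖x‖) : r ≤ lambda1 L := by
  obtain ⟨x₀, hx₀, hx₀0⟩ := hL
  have hS : {r : ℝ | ∃ x ∈ L, x ≠ 0 ∧ ‖x‖ = r}.Nonempty := ⟨_, x₀, hx₀, hx₀0, rfl⟩
  refine le_of_forall_pos_le_add fun ε hε => ?_
  obtain ⟨_, ⟨x, hx, hx0, rfl⟩, hlt⟩ :=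
    exists_lt_of_csInf_lt hS (lt_min hc (lt_add_of_pos_right (lambda1 L) hε))
  exact (h x hx hx0 (hlt.trans_le (min_le_left _ _))).trans (hlt.trans_le (min_le_right _ _)).le

lemma lambda1_block_le {B : ℕ → Euc m} {d n : ℕ} (hB : LinearIndepOn ℝ B (Set.Iio n))
    (hdn : d ≤ n) (hne : ∃ x ∈ latticeSpan B n, x ≠ 0)
    (hgap : lambda1 (latticeSpan B n) < lambda1 (latticeSpan B d)) :
    lambda1 (latticeSpan (block B d) (n - d)) ≤ lambda1 (latticeSpan B n) := by
  refine le_lambda1_of_forall_lt hne hgap fun x hx hx0 hxd => ?_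
  have hPx0 : projGS B d x ≠ 0 := fun h0 =>
    (lambda1_le_norm (mem_latticeSpan_of_projGS_eq_zero hB hdn hx h0) hx0).not_gt hxd
  exact (lambda1_le_norm (projGS_mem_latticeSpan_block hx) hPx0).trans (norm_projGS_le B d x)

theorem gluing_svp_general {m n d : ℕ} (hdn : d < n) {α β : ℝ}
    (hα : 1 ≤ α) (hβ : 1 ≤ β)
    (B : ℕ → Euc m) (hB : LinearIndependent ℝ (fun i : Fin n => B i))
    (hblock : SVPReduced β (block B d) (n - d))
    (hfirst : ‖B 0‖ ≤ α * ‖gsoVec B d‖)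
    (hgap : lambda1 (latticeSpan B n) < lambda1 (latticeSpan (block B 0) d)) :
    ‖B 0‖ ≤ α * β * lambda1 (latticeSpan B n) := by
  have hB' : LinearIndepOn ℝ B (Set.Iio n) :=
    (linearIndependent_equiv Fin.equivSubtype.symm).mpr hB
  have hne : ∃ x ∈ latticeSpan B n, x ≠ 0 :=
    ⟨B 0, Submodule.subset_span ⟨0, Nat.zero_lt_of_lt hdn, rfl⟩, hB.ne_zero ⟨0, by omega⟩⟩
  rw [block_zero] at hgap
  have hlambda := lambda1_block_le hB' hdn.le hne hgap
  -- `gsoVec B d` is by definition the first vector `block B d 0` of the projected block.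
  calc ‖B 0‖ ≤ α * ‖gsoVec B d‖ := hfirst
    _ ≤ α * (β * lambda1 (latticeSpan (block B d) (n - d))) :=
      mul_le_mul_of_nonneg_left hblock (by linarith)
    _ ≤ α * (β * lambda1 (latticeSpan B n)) := by gcongr
    _ = α * β * lambda1 (latticeSpan B n) := (mul_assoc _ _ _).symm

/-- gluing lemma, SVP part. -/
theorem gluing_svp {m n d : ℕ} (hd1 : 1 ≤ d) (hdn : d < n) {α β : ℝ}
    (hα : 1 ≤ α) (hβ : 1 ≤ β)
    (B : ℕ → Euc m) (hB : LinearIndependent ℝ (fun i : Fin n => B i))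
    (hblock : SVPReduced β (block B d) (n - d))
    (hfirst : ‖B 0‖ ≤ α * ‖gsoVec B d‖)
    (hgap : lambda1 (latticeSpan B n) < lambda1 (latticeSpan (block B 0) d)) :
    ‖B 0‖ ≤ α * β * lambda1 (latticeSpan B n) :=
  gluing_svp_general hdn hα hβ B hB hblock hfirst hgap

end
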